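/- arXiv:2604.04551 — 4 statements merged into one kernel-verified Lean document; each statement's English description precedes it below -/
import Mathlib

section
/- Let g : ℝⁿ → ℝ∪{+∞} be proper, closed and convex, let λ > 0, ε ≥ 0, y ∈ ℝⁿ. Then ỹ is an ε-inexact evaluation of prox_{λ⁻¹ g*} at λ⁻¹ y (i.e., λ⁻¹ y − ỹ ∈ λ⁻¹ ∂_ε g*(ỹ)) if and only if y − λ ỹ is an ε-inexact evaluation of prox_{λ g} at y (i.e., λ⁻¹(y − (y − λỹ)) ∈ ∂_ε g(y − λỹ)). (Inexact Moreau decomposition.) -/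
open scoped RealInnerProductSpace

/-- Fenchel conjugate of an extended-real-valued function on ℝⁿ. -/
noncomputable def fenchelConj {n : ℕ} (g : EuclideanSpace ℝ (Fin n) → EReal)
    (y : EuclideanSpace ℝ (Fin n)) : EReal :=
  ⨆ x, ((⟪y, x⟫ : ℝ) : EReal) - g x

/-- The ε-subdifferential of `g` at `xb`. -/
def epsSubdiff {n : ℕ} (g : EuclideanSpace ℝ (Fin n) → EReal) (ε : ℝ)
    (xb : EuclideanSpace ℝ (Fin n)) : Set (EuclideanSpace ℝ (Fin n)) :=
  {v | ∀ x, ((⟪v, x - xb⟫ : ℝ) : EReal) + g xb ≤ g x + (ε : EReal)}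

lemma ecases (a : EReal) (h : a ≠ ⊥) : a = ⊤ ∨ ∃ r : ℝ, a = (r : EReal) := by
  rcases eq_or_ne a ⊤ with h' | h'
  · exact Or.inl h'
  · exact Or.inr ⟨a.toReal, (EReal.coe_toReal h' h).symm⟩

lemma fy {n : ℕ} (g : EuclideanSpace ℝ (Fin n) → EReal) (v z : EuclideanSpace ℝ (Fin n)) :
    ((⟪v, z⟫ : ℝ) : EReal) - g z ≤ fenchelConj g v :=
  le_iSup (fun x => ((⟪v, x⟫ : ℝ) : EReal) - g x) z

lemma conj_le {n : ℕ} {g : EuclideanSpace ℝ (Fin n) → EReal} {v : EuclideanSpace ℝ (Fin n)}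
    {β : ℝ} (h : ∀ z, ((⟪v, z⟫ : ℝ) : EReal) - g z ≤ (β : EReal)) :
    fenchelConj g v ≤ (β : EReal) := iSup_le h

lemma epi_closed {n : ℕ} {g : EuclideanSpace ℝ (Fin n) → EReal}
    (hlsc : LowerSemicontinuous g) :
    IsClosed {p : EuclideanSpace ℝ (Fin n) × ℝ | g p.1 ≤ (p.2 : EReal)} := by
  rw [← isOpen_compl_iff, isOpen_iff_mem_nhds]
  rintro ⟨z, t⟩ hp
  simp only [Set.mem_compl_iff, Set.mem_setOf_eq, not_le] at hp
  obtain ⟨r, hr1, hr2⟩ := EReal.exists_between_coe_real hp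
  have hU := hlsc z _ hr2
  rw [nhds_prod_eq]
  refine Filter.mem_of_superset
    (Filter.prod_mem_prod hU (Iio_mem_nhds (EReal.coe_lt_coe_iff.1 hr1))) ?_
  rintro ⟨z', t'⟩ ⟨h1, h2⟩
  simp only [Set.mem_compl_iff, Set.mem_setOf_eq, not_le]
  exact lt_trans (EReal.coe_lt_coe_iff.2 h2) h1

lemma sep {n : ℕ} {S : Set (EuclideanSpace ℝ (Fin n) × ℝ)} (hconv : Convex ℝ S)
    (hcl : IsClosed S) {p : EuclideanSpace ℝ (Fin n) × ℝ} (hp : p ∉ S) :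
    ∃ (w : EuclideanSpace ℝ (Fin n)) (s α : ℝ),
      ⟪w, p.1⟫ + s * p.2 < α ∧ ∀ q ∈ S, α < ⟪w, q.1⟫ + s * q.2 := by
  obtain ⟨f, u, hfx, hfb⟩ := geometric_hahn_banach_point_closed hconv hcl hp
  set φ : EuclideanSpace ℝ (Fin n) →L[ℝ] ℝ :=
    f.comp (ContinuousLinearMap.inl ℝ (EuclideanSpace ℝ (Fin n)) ℝ) with hφ
  have key : ∀ q : EuclideanSpace ℝ (Fin n) × ℝ, f q = φ q.1 + f (0, 1) * q.2 := by
    intro q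
    have hq : q = (q.1, (0:ℝ)) + q.2 • ((0 : EuclideanSpace ℝ (Fin n)), (1:ℝ)) := by
      simp [Prod.ext_iff]
    rw [hq, map_add, map_smul]
    simp [hφ, mul_comm]
  refine ⟨(InnerProductSpace.toDual ℝ _).symm φ, f (0, 1), u, ?_, ?_⟩
  · rw [InnerProductSpace.toDual_symm_apply, ← key]; exact hfx
  · intro q hq
    rw [InnerProductSpace.toDual_symm_apply, ← key]
    exact hfb q hq

-- helper: conjugate bound from a separating functional with positive vertical part
lemma conj_bound {n : ℕ} {g : EuclideanSpace ℝ (Fin n) → EReal}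
    (hbot : ∀ x, g x ≠ ⊥) {w : EuclideanSpace ℝ (Fin n)} {s α : ℝ} (hs : 0 < s)
    (h2 : ∀ q ∈ {p : EuclideanSpace ℝ (Fin n) × ℝ | g p.1 ≤ (p.2 : EReal)},
      α < ⟪w, q.1⟫ + s * q.2) :
    fenchelConj g (-s⁻¹ • w) ≤ ((-α / s : ℝ) : EReal) := by
  apply conj_le
  intro z
  rcases ecases (g z) (hbot z) with hz | ⟨b, hb⟩
  · rw [hz, EReal.sub_top]; exact bot_le
  · rw [hb, ← EReal.coe_sub, EReal.coe_le_coe_iff]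
    have hmem : (z, b) ∈ {p : EuclideanSpace ℝ (Fin n) × ℝ | g p.1 ≤ (p.2 : EReal)} := by
      simp [Set.mem_setOf_eq, hb]
    have hzb := h2 (z, b) hmem
    rw [real_inner_smul_left]
    simp only at hzb
    rw [le_div_iff₀ hs]
    have hexp : (-s⁻¹ * ⟪w, z⟫ - b) * s = -⟪w, z⟫ - b * s := by field_simp
    rw [hexp]
    linarith

lemma biconj {n : ℕ} {g : EuclideanSpace ℝ (Fin n) → EReal}
    (hlsc : LowerSemicontinuous g)
    (hconv : Convex ℝ {p : EuclideanSpace ℝ (Fin n) × ℝ | g p.1 ≤ (p.2 : EReal)})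
    (hproper_top : ∃ x, g x ≠ ⊤) (hbot : ∀ x, g x ≠ ⊥)
    (x : EuclideanSpace ℝ (Fin n)) : g x ≤ fenchelConj (fenchelConj g) x := by
  by_contra hcon
  push_neg at hcon
  obtain ⟨c, hc1, hc2⟩ := EReal.exists_between_coe_real hcon
  have hgoal : (c : EReal) ≤ fenchelConj (fenchelConj g) x := by
    clear hcon hc1
    set S := {p : EuclideanSpace ℝ (Fin n) × ℝ | g p.1 ≤ (p.2 : EReal)} with hS
    have hScl : IsClosed S := epi_closed hlsc
    obtain ⟨x₀, hx₀⟩ := hproper_top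
    obtain ⟨r₀, hr₀⟩ : ∃ r : ℝ, g x₀ = (r : EReal) := by
      rcases ecases (g x₀) (hbot x₀) with h | h
      · exact absurd h hx₀
      · exact h
    have hx₀S : (x₀, r₀) ∈ S := by simp [hS, Set.mem_setOf_eq, hr₀]
    have hpS : ((x, c) : EuclideanSpace ℝ (Fin n) × ℝ) ∉ S := by
      simp only [hS, Set.mem_setOf_eq, not_le]; exact hc2
    obtain ⟨w, s, α, h1, h2⟩ := sep hconv hScl hpS
    simp only at h1 h2
    have hs0 : 0 ≤ s := by
      by_contra hneg
      push_neg at hneg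
      set T := max r₀ ((α - ⟪w, x₀⟫) / s) with hT
      have hTS : (x₀, T) ∈ S := by
        simp only [hS, Set.mem_setOf_eq, hr₀]
        exact EReal.coe_le_coe_iff.2 (le_max_left _ _)
      have := h2 (x₀, T) hTS
      simp only at this
      have hdiv : (α - ⟪w, x₀⟫) / s ≤ T := le_max_right _ _
      have : s * T ≤ α - ⟪w, x₀⟫ := by
        have := mul_le_mul_of_nonpos_left hdiv hneg.le
        rwa [mul_div_cancel₀ _ hneg.ne] at this
      linarith
    rcases eq_or_lt_of_le hs0 with hseq | hspos
    · -- s = 0 case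
      rw [← hseq] at h1 h2
      simp only [zero_mul, add_zero] at h1 h2
      -- second separation to get a point where conjugate is finite
      have hp'S : ((x₀, r₀ - 1) : EuclideanSpace ℝ (Fin n) × ℝ) ∉ S := by
        simp only [hS, Set.mem_setOf_eq, not_le, hr₀]
        exact EReal.coe_lt_coe_iff.2 (by linarith)
      obtain ⟨w', s', α', h1', h2'⟩ := sep hconv hScl hp'S
      simp only at h1' h2'
      have hkey := h2' (x₀, r₀) hx₀S
      simp only at hkey
      have hs' : 0 < s' := by nlinarith
      set v₀ := -s'⁻¹ • w' with hv₀
      set β := -α' / s' with hβ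
      have hconj₀ : fenchelConj g v₀ ≤ (β : EReal) := conj_bound hbot hs' h2'
      clear_value v₀
      set d := α - ⟪w, x⟫ with hd
      have hdpos : 0 < d := by rw [hd]; linarith
      set t := max 0 ((c - ⟪v₀, x⟫ + β) / d) with ht
      have ht0 : 0 ≤ t := le_max_left _ _
      set u := v₀ - t • w with hu
      have hconjt : fenchelConj g u ≤ ((β - t * α : ℝ) : EReal) := by
        apply conj_le
        intro z
        rcases ecases (g z) (hbot z) with hz | ⟨b, hb⟩
        · rw [hz, EReal.sub_top]; exact bot_le
        · rw [hb, ← EReal.coe_sub, EReal.coe_le_coe_iff]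
          have hA : ⟪v₀, z⟫ - b ≤ β := by
            have h' := fy g v₀ z
            rw [hb, ← EReal.coe_sub] at h'
            exact EReal.coe_le_coe_iff.1 (le_trans h' hconj₀)
          have hB : α < ⟪w, z⟫ := h2 (z, b) (by simp [hS, Set.mem_setOf_eq, hb])
          have huz : ⟪u, z⟫ = ⟪v₀, z⟫ - t * ⟪w, z⟫ := by
            simp only [hu, inner_sub_left, real_inner_smul_left]
          rw [huz]
          nlinarith
      have hchain : ((⟪x, u⟫ - (β - t * α) : ℝ) : EReal) ≤ fenchelConj (fenchelConj g) x := by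
        rw [EReal.coe_sub]
        exact le_trans (EReal.sub_le_sub le_rfl hconjt) (fy (fenchelConj g) x u)
      refine le_trans ?_ hchain
      rw [EReal.coe_le_coe_iff]
      have hux : ⟪x, u⟫ = ⟪x, v₀⟫ - t * ⟪w, x⟫ := by
        simp only [hu, inner_sub_right, real_inner_smul_right, real_inner_comm x w]
      have htd : c - ⟪v₀, x⟫ + β ≤ t * d := by
        have : (c - ⟪v₀, x⟫ + β) / d ≤ t := le_max_right _ _
        calc c - ⟪v₀, x⟫ + β = ((c - ⟪v₀, x⟫ + β) / d) * d := by field_simp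
        _ ≤ t * d := by exact mul_le_mul_of_nonneg_right this hdpos.le
      rw [hux]
      rw [real_inner_comm x v₀] at htd
      simp only [hd] at htd
      nlinarith
    · -- s > 0 case
      set v₁ := -s⁻¹ • w with hv₁
      have hconj₁ : fenchelConj g v₁ ≤ ((-α / s : ℝ) : EReal) := conj_bound hbot hspos h2
      have hchain : ((⟪x, v₁⟫ - (-α / s) : ℝ) : EReal) ≤ fenchelConj (fenchelConj g) x := by
        rw [EReal.coe_sub]
        exact le_trans (EReal.sub_le_sub le_rfl hconj₁) (fy (fenchelConj g) x v₁)
      refine le_trans ?_ hchain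
      rw [EReal.coe_le_coe_iff]
      have hx1 : ⟪x, v₁⟫ = -s⁻¹ * ⟪w, x⟫ := by
        rw [real_inner_comm, hv₁, real_inner_smul_left]
      rw [hx1]
      have hexp : -s⁻¹ * ⟪w, x⟫ - -α / s = (α - ⟪w, x⟫) / s := by
        field_simp
        ring
      rw [hexp, le_div_iff₀ hspos]
      nlinarith [h1]
  exact absurd hgoal (not_le.2 hc1)

lemma subdiff_conj_iff {n : ℕ} {g : EuclideanSpace ℝ (Fin n) → EReal}
    (hlsc : LowerSemicontinuous g)
    (hconv : Convex ℝ {p : EuclideanSpace ℝ (Fin n) × ℝ | g p.1 ≤ (p.2 : EReal)})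
    (hproper_top : ∃ x, g x ≠ ⊤) (hbot : ∀ x, g x ≠ ⊥) (ε : ℝ)
    (x v : EuclideanSpace ℝ (Fin n)) :
    x ∈ epsSubdiff (fenchelConj g) ε v ↔ v ∈ epsSubdiff g ε x := by
  obtain ⟨x₀, hx₀⟩ := hproper_top
  obtain ⟨r₀, hr₀⟩ : ∃ r : ℝ, g x₀ = (r : EReal) := by
    rcases ecases (g x₀) (hbot x₀) with h | h
    · exact absurd h hx₀
    · exact h
  have hcb : ∀ u, fenchelConj g u ≠ ⊥ := by
    intro u hbotu
    have h' := fy g u x₀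
    rw [hr₀, ← EReal.coe_sub, hbotu] at h'
    exact absurd h' (EReal.bot_lt_coe _).not_ge
  constructor
  · -- hard direction, uses biconjugation
    intro h z
    by_cases hvt : fenchelConj g v = ⊤
    · exfalso
      have hall : ∀ u, fenchelConj g u = ⊤ := by
        intro u
        have hu := h u
        rw [hvt, EReal.add_top_of_ne_bot (EReal.coe_ne_bot _)] at hu
        by_contra hne
        rcases ecases _ (hcb u) with h' | ⟨cu, hcu⟩
        · exact hne h'
        · rw [hcu, ← EReal.coe_add, top_le_iff] at hu
          exact EReal.coe_ne_top _ hu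
      have hbb : fenchelConj (fenchelConj g) x ≤ ⊥ := by
        refine iSup_le fun u => ?_
        rw [hall u, EReal.sub_top]
      have := le_trans (biconj hlsc hconv ⟨x₀, hx₀⟩ hbot x) hbb
      exact hbot x (le_bot_iff.1 this)
    · obtain ⟨a, hva⟩ : ∃ r : ℝ, fenchelConj g v = (r : EReal) := by
        rcases ecases _ (hcb v) with h' | h'
        · exact absurd h' hvt
        · exact h'
      have hbc : fenchelConj (fenchelConj g) x ≤ ((⟪x, v⟫ - a + ε : ℝ) : EReal) := by
        apply conj_le
        intro u
        have hu := h u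
        rw [hva] at hu
        rcases ecases _ (hcb u) with ht | ⟨cu, hcu⟩
        · rw [ht, EReal.sub_top]; exact bot_le
        · rw [hcu] at hu ⊢
          rw [← EReal.coe_add, ← EReal.coe_add, EReal.coe_le_coe_iff] at hu
          rw [← EReal.coe_sub, EReal.coe_le_coe_iff]
          rw [inner_sub_right] at hu
          linarith
      have hgx := le_trans (biconj hlsc hconv ⟨x₀, hx₀⟩ hbot x) hbc
      obtain ⟨gx, hgx'⟩ : ∃ r : ℝ, g x = (r : EReal) := by
        rcases ecases _ (hbot x) with h' | h'
        · rw [h', top_le_iff] at hgx; exact absurd hgx (EReal.coe_ne_top _)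
        · exact h'
      rw [hgx'] at hgx
      replace hgx := EReal.coe_le_coe_iff.1 hgx
      rcases ecases (g z) (hbot z) with hz | ⟨b, hb⟩
      · rw [hz, EReal.top_add_of_ne_bot (EReal.coe_ne_bot _)]; exact le_top
      · have ha_lb : ⟪v, z⟫ - b ≤ a := by
          have h' := fy g v z
          rw [hb, hva, ← EReal.coe_sub, EReal.coe_le_coe_iff] at h'
          exact h'
        rw [hgx', hb, ← EReal.coe_add, ← EReal.coe_add, EReal.coe_le_coe_iff, inner_sub_right]
        have hcm := real_inner_comm x v
        linarith
  · -- easy direction (Fenchel–Young)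
    intro h u
    have hgxt : g x ≠ ⊤ := by
      intro htop
      have h' := h x₀
      rw [htop, EReal.add_top_of_ne_bot (EReal.coe_ne_bot _), hr₀, ← EReal.coe_add,
        top_le_iff] at h'
      exact EReal.coe_ne_top _ h'
    obtain ⟨gx, hgx'⟩ : ∃ r : ℝ, g x = (r : EReal) := by
      rcases ecases _ (hbot x) with h' | h'
      · exact absurd h' hgxt
      · exact h'
    have hub : fenchelConj g v ≤ ((⟪v, x⟫ - gx + ε : ℝ) : EReal) := by
      apply conj_le
      intro z
      rcases ecases (g z) (hbot z) with hz | ⟨b, hb⟩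
      · rw [hz, EReal.sub_top]; exact bot_le
      · have h' := h z
        rw [hgx', hb, ← EReal.coe_add, ← EReal.coe_add, EReal.coe_le_coe_iff,
          inner_sub_right] at h'
        rw [hb, ← EReal.coe_sub, EReal.coe_le_coe_iff]
        linarith
    obtain ⟨a, hva⟩ : ∃ r : ℝ, fenchelConj g v = (r : EReal) := by
      rcases ecases _ (hcb v) with h' | h'
      · rw [h', top_le_iff] at hub; exact absurd hub (EReal.coe_ne_top _)
      · exact h'
    have ha : a ≤ ⟪v, x⟫ - gx + ε := by
      rw [hva, EReal.coe_le_coe_iff] at hub; exact hub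
    rw [hva]
    rcases ecases _ (hcb u) with ht | ⟨cu, hcu⟩
    · rw [ht, EReal.top_add_of_ne_bot (EReal.coe_ne_bot _)]; exact le_top
    · have hcu_lb : ⟪u, x⟫ - gx ≤ cu := by
        have h' := fy g u x
        rw [hgx', hcu, ← EReal.coe_sub, EReal.coe_le_coe_iff] at h'
        exact h'
      rw [hcu, ← EReal.coe_add, ← EReal.coe_add, EReal.coe_le_coe_iff, inner_sub_right]
      have h1 := real_inner_comm x v
      have h2 := real_inner_comm x u
      linarith


/-- **Inexact Moreau decomposition.** For `g` proper, closed (lower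
semicontinuous) and convex (convex epigraph), `λ > 0`, `ε ≥ 0`:
`ỹ ≈_ε prox_{λ⁻¹ g*}(λ⁻¹ y)` (i.e. `λ⁻¹ y − ỹ ∈ λ⁻¹ ∂_ε g*(ỹ)`) iff
`y − λ ỹ ≈_ε prox_{λ g}(y)` (i.e. `λ⁻¹(y − (y − λ ỹ)) ∈ ∂_ε g(y − λ ỹ)`). -/
theorem stmt1 {n : ℕ} (g : EuclideanSpace ℝ (Fin n) → EReal)
    (hlsc : LowerSemicontinuous g)
    (hconv : Convex ℝ {p : EuclideanSpace ℝ (Fin n) × ℝ | g p.1 ≤ (p.2 : EReal)})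
    (hproper_top : ∃ x, g x ≠ ⊤) (hproper_bot : ∀ x, g x ≠ ⊥)
    (lam : ℝ) (hlam : 0 < lam) (ε : ℝ) (hε : 0 ≤ ε)
    (y yt : EuclideanSpace ℝ (Fin n)) :
    lam⁻¹ • y - yt ∈ (fun w => lam⁻¹ • w) '' epsSubdiff (fenchelConj g) ε yt ↔
      lam⁻¹ • (y - (y - lam • yt)) ∈ epsSubdiff g ε (y - lam • yt) := by
  have hpt : lam⁻¹ • (y - (y - lam • yt)) = yt := by
    rw [sub_sub_cancel, smul_smul, inv_mul_cancel₀ hlam.ne', one_smul]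
  have himg : lam⁻¹ • y - yt ∈ (fun w => lam⁻¹ • w) '' epsSubdiff (fenchelConj g) ε yt ↔
      y - lam • yt ∈ epsSubdiff (fenchelConj g) ε yt := by
    constructor
    · rintro ⟨w, hw, hweq⟩
      have hw' : w = y - lam • yt := by
        have := congrArg (fun z => lam • z) hweq
        simpa [smul_smul, mul_inv_cancel₀ hlam.ne', smul_sub] using this
      rwa [hw'] at hw
    · intro hmem
      refine ⟨y - lam • yt, hmem, ?_⟩
      show lam⁻¹ • (y - lam • yt) = _
      rw [smul_sub, smul_smul, inv_mul_cancel₀ hlam.ne', one_smul]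
  rw [hpt, himg]
  exact subdiff_conj_iff hlsc hconv hproper_top hproper_bot ε (y - lam • yt) yt
end

section
/- Let F : ℝⁿ → ℝ∪{+∞} be proper closed convex with nonempty minimizer set S and minimum F_min, satisfying quadratic growth: F(x) ≥ F_min + (κ/2) dist(x, S)² for all x and some κ > 0. Let f be the smooth part and g the nonsmooth part of F = f + g with f convex differentiable. Suppose v⁺ = prox_{τ⁻¹g}(v − τ⁻¹∇f(v)) satisfies D_f(v⁺, v) ≤ (τ/2)‖v⁺ − v‖². Then dist(v⁺, S)² ≤ (1/(1 + κ/τ)) dist(v, S)². (One-step linear contraction of PGD under quadratic growth.) -/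
open scoped RealInnerProductSpace

set_option maxHeartbeats 1000000 in
/-- **One-step linear contraction of PGD under quadratic growth.**
`F = f + g` proper closed convex with minimizer set `S`, minimum `F_min`,
quadratic growth `F(x) ≥ F_min + (κ/2)dist(x,S)²`. If
`v⁺ = prox_{τ⁻¹g}(v − τ⁻¹∇f(v))` and `D_f(v⁺,v) ≤ (τ/2)‖v⁺ − v‖²`, then
`dist(v⁺, S)² ≤ (1/(1 + κ/τ)) dist(v, S)²`. -/
theorem stmt11 {n : ℕ} (f : EuclideanSpace ℝ (Fin n) → ℝ)
    (hf : ConvexOn ℝ Set.univ f)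
    (f' : EuclideanSpace ℝ (Fin n) → EuclideanSpace ℝ (Fin n))
    (hf' : ∀ x, HasGradientAt f (f' x) x)
    (g : EuclideanSpace ℝ (Fin n) → EReal)
    (hlsc : LowerSemicontinuous g)
    (hconv : Convex ℝ {p : EuclideanSpace ℝ (Fin n) × ℝ | g p.1 ≤ (p.2 : EReal)})
    (hproper_top : ∃ x, g x ≠ ⊤) (hproper_bot : ∀ x, g x ≠ ⊥)
    (F : EuclideanSpace ℝ (Fin n) → EReal)
    (hF : F = fun x => (f x : EReal) + g x)
    (Fmin : ℝ) (S : Set (EuclideanSpace ℝ (Fin n)))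
    (hS : S = {x | F x = (Fmin : EReal)}) (hSne : S.Nonempty)
    (hFmin : ∀ x, (Fmin : EReal) ≤ F x)
    (kappa : ℝ) (hk : 0 < kappa)
    (hQG : ∀ x, ((Fmin + kappa / 2 * Metric.infDist x S ^ 2 : ℝ) : EReal) ≤ F x)
    (tau : ℝ) (htau : 0 < tau)
    (v vp : EuclideanSpace ℝ (Fin n))
    (hprox : ∀ z, g vp + ((tau / 2 * ‖vp - (v - tau⁻¹ • f' v)‖ ^ 2 : ℝ) : EReal)
      ≤ g z + ((tau / 2 * ‖z - (v - tau⁻¹ • f' v)‖ ^ 2 : ℝ) : EReal))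
    (hls : f vp - f v - ⟪f' v, vp - v⟫ ≤ tau / 2 * ‖vp - v‖ ^ 2) :
    Metric.infDist vp S ^ 2 ≤ 1 / (1 + kappa / tau) * Metric.infDist v S ^ 2 := by
  classical
  set w := f' v with hw
  set u := v - tau⁻¹ • w with hu
  set d := Metric.infDist v S with hd
  set dp := Metric.infDist vp S with hdp
  have hd0 : 0 ≤ d := Metric.infDist_nonneg
  have hdp0 : 0 ≤ dp := Metric.infDist_nonneg
  have key : ∀ ε > (0:ℝ), (kappa + tau) * dp ^ 2 ≤ tau * (d + ε) ^ 2 := by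
    intro ε hε
    obtain ⟨z, hzS, hzlt⟩ := (Metric.infDist_lt_iff hSne).mp
      (show d < d + ε by linarith)
    have hzF : F z = (Fmin : EReal) := by rw [hS] at hzS; exact hzS
    -- g z is a real number c with  f z + c = Fmin
    have hgz_ne_top : g z ≠ ⊤ := by
      intro h
      rw [hF] at hzF
      simp only [h] at hzF
      simp at hzF
    obtain ⟨c, hc⟩ : ∃ c : ℝ, g z = (c : EReal) := by
      lift g z to ℝ using ⟨hgz_ne_top, hproper_bot z⟩ with c
      exact ⟨c, rfl⟩
    have hfzc : f z + c = Fmin := by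
      rw [hF] at hzF
      simp only [hc, ← EReal.coe_add] at hzF
      exact_mod_cast hzF
    -- g vp is a real number a
    have hgvp_ne_top : g vp ≠ ⊤ := by
      intro h
      have := hprox z
      rw [h, EReal.top_add_coe, hc, ← EReal.coe_add, top_le_iff] at this
      exact EReal.coe_ne_top _ this
    obtain ⟨a, ha⟩ : ∃ a : ℝ, g vp = (a : EReal) := by
      lift g vp to ℝ using ⟨hgvp_ne_top, hproper_bot vp⟩ with a
      exact ⟨a, rfl⟩
    -- variational inequality
    have hVI : a ≤ c + tau * ⟪vp - u, z - vp⟫ := by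
      have step : ∀ t ∈ Set.Ioo (0:ℝ) 1,
          c + tau * ⟪vp - u, z - vp⟫ + tau / 2 * t * ‖z - vp‖ ^ 2 ≥ a := by
        intro t ht
        have hgzt : g (vp + t • (z - vp)) ≤ (((1 - t) * a + t * c : ℝ) : EReal) := by
          have hmem1 : (vp, a) ∈ {p : EuclideanSpace ℝ (Fin n) × ℝ | g p.1 ≤ (p.2 : EReal)} := by
            simp [ha]
          have hmem2 : (z, c) ∈ {p : EuclideanSpace ℝ (Fin n) × ℝ | g p.1 ≤ (p.2 : EReal)} := by
            simp [hc]
          have := hconv hmem1 hmem2 (by linarith [ht.2] : (0:ℝ) ≤ 1 - t)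
            (le_of_lt ht.1) (by ring)
          simp only [Prod.smul_mk, Prod.mk_add_mk, Set.mem_setOf_eq, smul_eq_mul] at this
          have hpt : (1 - t) • vp + t • z = vp + t • (z - vp) := by module
          rw [hpt] at this
          exact this
        have h1 := (hprox (vp + t • (z - vp))).trans
          (add_le_add_left hgzt ((tau / 2 * ‖vp + t • (z - vp) - u‖ ^ 2 : ℝ) : EReal))
        rw [ha, ← EReal.coe_add, ← EReal.coe_add, EReal.coe_le_coe_iff] at h1
        -- expand the norm
        have hexp : ‖vp + t • (z - vp) - u‖ ^ 2
            = ‖vp - u‖ ^ 2 + 2 * (t * ⟪vp - u, z - vp⟫) + t ^ 2 * ‖z - vp‖ ^ 2 := by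
          have : vp + t • (z - vp) - u = (vp - u) + t • (z - vp) := by abel
          rw [this, norm_add_sq_real, real_inner_smul_right, norm_smul,
            Real.norm_eq_abs, abs_of_pos ht.1, mul_pow]
        rw [hexp] at h1
        have h2 : 0 ≤ t * ((c - a) + tau * ⟪vp - u, z - vp⟫ + tau / 2 * t * ‖z - vp‖ ^ 2) := by
          nlinarith [h1]
        have h3 := (mul_nonneg_iff_of_pos_left ht.1).mp h2
        linarith
      have htend : Filter.Tendsto
          (fun t : ℝ => c + tau * ⟪vp - u, z - vp⟫ + tau / 2 * t * ‖z - vp‖ ^ 2)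
          (nhdsWithin 0 (Set.Ioi 0)) (nhds (c + tau * ⟪vp - u, z - vp⟫)) := by
        have hcont : Continuous
            (fun t : ℝ => c + tau * ⟪vp - u, z - vp⟫ + tau / 2 * t * ‖z - vp‖ ^ 2) :=
          continuous_const.add ((continuous_const.mul continuous_id).mul continuous_const)
        have h0 : Filter.Tendsto
            (fun t : ℝ => c + tau * ⟪vp - u, z - vp⟫ + tau / 2 * t * ‖z - vp‖ ^ 2)
            (nhdsWithin 0 (Set.Ioi 0))
            (nhds (c + tau * ⟪vp - u, z - vp⟫ + tau / 2 * 0 * ‖z - vp‖ ^ 2)) :=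
          (hcont.tendsto 0).mono_left nhdsWithin_le_nhds
        simpa using h0
      refine ge_of_tendsto htend ?_
      filter_upwards [Ioo_mem_nhdsGT_of_mem (by constructor <;> norm_num :
        (0:ℝ) ∈ Set.Ico (0:ℝ) 1)] with t ht
      exact step t ht
    -- gradient inequality for convex f
    have hgrad : ⟪w, z - v⟫ ≤ f z - f v := by
      have hline : HasDerivAt (fun t : ℝ => f (v + t • (z - v))) ⟪w, z - v⟫ 0 := by
        have h1 : HasDerivAt (fun t : ℝ => v + t • (z - v)) (z - v) 0 := by
          simpa using ((hasDerivAt_id (0:ℝ)).smul_const (z - v)).const_add v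
        have h2 : HasFDerivAt f ((InnerProductSpace.toDual ℝ _) w) (v + (0:ℝ) • (z - v)) := by
          simpa using (hf' v).hasFDerivAt
        have := h2.comp_hasDerivAt 0 h1
        simpa [InnerProductSpace.toDual_apply_apply, Function.comp_def] using this
      have hslope : Filter.Tendsto (slope (fun t : ℝ => f (v + t • (z - v))) 0)
          (nhdsWithin 0 (Set.Ioi 0)) (nhds ⟪w, z - v⟫) := by
        exact (hasDerivAt_iff_tendsto_slope.mp hline).mono_left
          (nhdsWithin_mono _ (fun x hx => ne_of_gt hx))
      refine le_of_tendsto hslope ?_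
      filter_upwards [Ioo_mem_nhdsGT_of_mem (by constructor <;> norm_num :
        (0:ℝ) ∈ Set.Ico (0:ℝ) 1)] with t ht
      have hcvx := hf.2 (Set.mem_univ v) (Set.mem_univ z)
        (by linarith [ht.2] : (0:ℝ) ≤ 1 - t) (le_of_lt ht.1) (by ring)
      have hpt : (1 - t) • v + t • z = v + t • (z - v) := by module
      rw [hpt] at hcvx
      rw [slope_def_field]
      simp only [zero_smul, add_zero, sub_zero]
      rw [div_le_iff₀ ht.1]
      simp only [smul_eq_mul] at hcvx
      nlinarith [hcvx]
    -- quadratic growth at vp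
    have hQGvp : Fmin + kappa / 2 * dp ^ 2 ≤ f vp + a := by
      have := hQG vp
      rw [hF] at this
      simp only [ha, ← EReal.coe_add] at this
      exact_mod_cast this
    -- distances
    have hle1 : dp ≤ ‖z - vp‖ := by
      have := Metric.infDist_le_dist_of_mem hzS (x := vp)
      rwa [dist_eq_norm, norm_sub_rev] at this
    have hle2 : ‖z - v‖ < d + ε := by
      rw [dist_eq_norm] at hzlt
      rwa [norm_sub_rev]
    -- inner product expansions
    have hinner : ⟪vp - u, z - vp⟫ = ⟪vp - v, z - vp⟫ + tau⁻¹ * ⟪w, z - vp⟫ := by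
      have : vp - u = (vp - v) + tau⁻¹ • w := by rw [hu]; abel
      rw [this, inner_add_left, real_inner_smul_left]
    have hinner2 : ⟪w, vp - v⟫ + ⟪w, z - vp⟫ = ⟪w, z - v⟫ := by
      rw [← inner_add_right]
      congr 1
      abel
    have hnorm : ‖z - v‖ ^ 2 = ‖z - vp‖ ^ 2 + 2 * ⟪z - vp, vp - v⟫ + ‖vp - v‖ ^ 2 := by
      have : z - v = (z - vp) + (vp - v) := by abel
      rw [this, norm_add_sq_real]
    have hsym : ⟪z - vp, vp - v⟫ = ⟪vp - v, z - vp⟫ := real_inner_comm (vp - v) (z - vp)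
    have hVI' : a ≤ c + tau * ⟪vp - v, z - vp⟫ + ⟪w, z - vp⟫ := by
      have hdistrib : tau * (⟪vp - v, z - vp⟫ + tau⁻¹ * ⟪w, z - vp⟫)
          = tau * ⟪vp - v, z - vp⟫ + ⟪w, z - vp⟫ := by
        field_simp
      rw [hinner] at hVI
      linarith [hdistrib]
    have hnorm' : tau / 2 * ‖z - v‖ ^ 2
        = tau / 2 * ‖z - vp‖ ^ 2 + tau * ⟪vp - v, z - vp⟫ + tau / 2 * ‖vp - v‖ ^ 2 := by
      rw [hnorm, hsym]; ring
    have hchain : kappa / 2 * dp ^ 2 ≤ tau / 2 * (‖z - v‖ ^ 2 - ‖z - vp‖ ^ 2) := by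
      linarith [hls, hVI', hinner2, hgrad, hfzc, hQGvp, hnorm']
    have h1 : dp ^ 2 ≤ ‖z - vp‖ ^ 2 := pow_le_pow_left₀ hdp0 hle1 2
    have h2 : ‖z - v‖ ^ 2 ≤ (d + ε) ^ 2 := pow_le_pow_left₀ (norm_nonneg _) hle2.le 2
    have h1' := mul_le_mul_of_nonneg_left h1 (le_of_lt (half_pos htau))
    have h2' := mul_le_mul_of_nonneg_left h2 (le_of_lt (half_pos htau))
    linarith [hchain, h1', h2']
  -- take ε → 0
  have main : (kappa + tau) * dp ^ 2 ≤ tau * d ^ 2 := by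
    have htend : Filter.Tendsto (fun ε : ℝ => tau * (d + ε) ^ 2)
        (nhdsWithin 0 (Set.Ioi 0)) (nhds (tau * d ^ 2)) := by
      have hcont : Continuous (fun ε : ℝ => tau * (d + ε) ^ 2) :=
        continuous_const.mul ((continuous_const.add continuous_id).pow 2)
      have h0 : Filter.Tendsto (fun ε : ℝ => tau * (d + ε) ^ 2)
          (nhdsWithin 0 (Set.Ioi 0)) (nhds (tau * (d + 0) ^ 2)) :=
        (hcont.tendsto 0).mono_left nhdsWithin_le_nhds
      simpa using h0
    refine ge_of_tendsto htend ?_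
    filter_upwards [self_mem_nhdsWithin] with ε hε
    exact key ε hε
  have h1 : (0:ℝ) < 1 + kappa / tau := by positivity
  rw [div_mul_eq_mul_div, le_div_iff₀ h1, one_mul]
  have : dp ^ 2 * (1 + kappa / tau) = ((kappa + tau) * dp ^ 2) / tau := by
    field_simp; ring
  rw [this, div_le_iff₀ htau]
  linarith [main]
end

section
/- Under quadratic growth and the one-step contraction hypotheses, proximal gradient descent with step parameters τ_j ≤ τ̄ satisfies, for all j ≥ 0: F(v_{j+1}) − F_min ≤ (τ_j/2) dist(v_j, S)² ≤ (τ_j/2) (1/(1 + κ/τ̄))^j dist(v_0, S)². (Linear convergence of function values of PGD under quadratic growth.) -/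
open scoped RealInnerProductSpace

lemma aux_le13 {a b M : ℝ} (h : ∀ t : ℝ, 0 < t → t ≤ 1 → a ≤ b + t * M) : a ≤ b := by
  rcases le_or_gt M 0 with hM | hM
  · have := h 1 one_pos le_rfl; nlinarith
  · by_contra hab
    push_neg at hab
    have ht0 : 0 < min 1 ((a - b) / (2 * M)) :=
      lt_min one_pos (div_pos (by linarith) (by positivity))
    have h1 := h _ ht0 (min_le_left _ _)
    have h2 : min 1 ((a - b) / (2 * M)) * M ≤ (a - b) / 2 := by
      have h3 : min 1 ((a - b) / (2 * M)) ≤ (a - b) / (2 * M) := min_le_right _ _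
      calc min 1 ((a - b) / (2 * M)) * M ≤ (a - b) / (2 * M) * M :=
            mul_le_mul_of_nonneg_right h3 hM.le
        _ = (a - b) / 2 := by field_simp
    linarith

lemma grad_ineq13 {E : Type*} [NormedAddCommGroup E] [InnerProductSpace ℝ E]
    [CompleteSpace E]
    {f : E → ℝ} (hf : ConvexOn ℝ Set.univ f) {x p : E} (hx : HasGradientAt f p x)
    (z : E) : f x + ⟪p, z - x⟫ ≤ f z := by
  set φ : ℝ → ℝ := f ∘ (AffineMap.lineMap x z) with hφ
  have hconv : ConvexOn ℝ Set.univ φ := by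
    have := hf.comp_affineMap (AffineMap.lineMap x z)
    simpa using this
  have hline : HasDerivAt (fun t : ℝ => AffineMap.lineMap x z t) (z - x) 0 := by
    have h0 : HasDerivAt (fun t : ℝ => t • (z - x) + x) (z - x) 0 := by
      have : HasDerivAt (fun t : ℝ => t • (z - x)) ((1:ℝ) • (z - x)) 0 :=
        (hasDerivAt_id 0).smul_const (z - x)
      simpa using this.add_const x
    apply h0.congr_of_eventuallyEq
    filter_upwards with t
    rw [AffineMap.lineMap_apply_module]; module
  have hd : HasDerivAt φ ⟪p, z - x⟫ 0 := by
    have h1 := hx.hasFDerivAt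
    rw [show x = AffineMap.lineMap x z (0:ℝ) by simp] at h1
    have h2 := h1.comp_hasDerivAt (x := (0:ℝ)) hline
    simpa [hφ, InnerProductSpace.toDual_apply_apply] using h2
  have := hconv.le_slope_of_hasDerivAt (Set.mem_univ 0) (Set.mem_univ 1) one_pos hd
  rw [slope_def_field] at this
  simp [φ] at this
  linarith

lemma ereal_eq_sub13 {x : EReal} {a b : ℝ} (hb : x ≠ ⊥) (h : (a : EReal) + x = (b : EReal)) :
    x = ((b - a : ℝ) : EReal) := by
  induction x with
  | bot => simp at hb
  | coe r =>
    rw [← EReal.coe_add, EReal.coe_eq_coe_iff] at h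
    norm_cast; linarith
  | top => simp [EReal.add_top_of_ne_bot] at h

lemma ereal_le_extract13 {x : EReal} {a b : ℝ} (hb : x ≠ ⊥) (h : x + (a : EReal) ≤ (b : EReal)) :
    ∃ r : ℝ, x = (r : EReal) ∧ r + a ≤ b := by
  induction x with
  | bot => simp at hb
  | coe r =>
    exact ⟨r, rfl, by rwa [← EReal.coe_add, EReal.coe_le_coe_iff] at h⟩
  | top => simp [EReal.top_add_of_ne_bot] at h

lemma norm_add_smul_sq13 {E : Type*} [NormedAddCommGroup E] [InnerProductSpace ℝ E]
    (a b : E) (t : ℝ) :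
    ‖a + t • b‖ ^ 2 = ‖a‖ ^ 2 + 2 * (t * ⟪a, b⟫) + t ^ 2 * ‖b‖ ^ 2 := by
  rw [norm_add_sq_real, real_inner_smul_right, norm_smul]
  simp [mul_pow, sq_abs]

set_option maxHeartbeats 1000000 in
/-- **Linear convergence of PGD function values under quadratic growth.**
With `F = f + g` satisfying quadratic growth (constant `κ > 0`) and PGD
iterates `v_{j+1} = prox_{τ_j⁻¹ g}(v_j − τ_j⁻¹∇f(v_j))` with
`D_f(v_{j+1}, v_j) ≤ (τ_j/2)‖v_{j+1} − v_j‖²` and `τ_j ≤ τ̄`: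
`F(v_{j+1}) − F_min ≤ (τ_j/2)dist(v_j,S)²
  ≤ (τ_j/2)(1/(1 + κ/τ̄))^j dist(v_0,S)²` for all `j ≥ 0`. -/
theorem stmt13 {n : ℕ} (f : EuclideanSpace ℝ (Fin n) → ℝ)
    (hf : ConvexOn ℝ Set.univ f)
    (f' : EuclideanSpace ℝ (Fin n) → EuclideanSpace ℝ (Fin n))
    (hf' : ∀ x, HasGradientAt f (f' x) x)
    (g : EuclideanSpace ℝ (Fin n) → EReal)
    (hlsc : LowerSemicontinuous g)
    (hconv : Convex ℝ {p : EuclideanSpace ℝ (Fin n) × ℝ | g p.1 ≤ (p.2 : EReal)})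
    (hproper_top : ∃ x, g x ≠ ⊤) (hproper_bot : ∀ x, g x ≠ ⊥)
    (F : EuclideanSpace ℝ (Fin n) → EReal)
    (hF : F = fun x => (f x : EReal) + g x)
    (Fmin : ℝ) (S : Set (EuclideanSpace ℝ (Fin n)))
    (hS : S = {x | F x = (Fmin : EReal)}) (hSne : S.Nonempty)
    (hFmin : ∀ x, (Fmin : EReal) ≤ F x)
    (kappa : ℝ) (hk : 0 < kappa)
    (hQG : ∀ x, ((Fmin + kappa / 2 * Metric.infDist x S ^ 2 : ℝ) : EReal) ≤ F x)
    (v : ℕ → EuclideanSpace ℝ (Fin n)) (tau : ℕ → ℝ) (taub : ℝ)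
    (htau_pos : ∀ j, 0 < tau j) (htaub : ∀ j, tau j ≤ taub)
    (hstep : ∀ j z,
      g (v (j + 1)) +
        ((tau j / 2 * ‖v (j + 1) - (v j - (tau j)⁻¹ • f' (v j))‖ ^ 2 : ℝ) : EReal)
      ≤ g z + ((tau j / 2 * ‖z - (v j - (tau j)⁻¹ • f' (v j))‖ ^ 2 : ℝ) : EReal))
    (hls : ∀ j, f (v (j + 1)) - f (v j) - ⟪f' (v j), v (j + 1) - v j⟫
      ≤ tau j / 2 * ‖v (j + 1) - v j‖ ^ 2) :
    ∀ j : ℕ,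
      F (v (j + 1)) ≤ ((Fmin + tau j / 2 * Metric.infDist (v j) S ^ 2 : ℝ) : EReal) ∧
      tau j / 2 * Metric.infDist (v j) S ^ 2
        ≤ tau j / 2 * (1 / (1 + kappa / taub)) ^ j * Metric.infDist (v 0) S ^ 2 := by
  obtain ⟨z₀, hz₀S⟩ := hSne
  have htb : 0 < taub := lt_of_lt_of_le (htau_pos 0) (htaub 0)
  -- value of g on S
  have hgS : ∀ z ∈ S, g z = ((Fmin - f z : ℝ) : EReal) := by
    intro z hz
    rw [hS] at hz
    have hz' : (f z : EReal) + g z = (Fmin : EReal) := by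
      have := hz; rw [hF] at this; exact this
    exact ereal_eq_sub13 (hproper_bot z) hz'
  -- main one-step inequality
  have main : ∀ j, ∃ G : ℝ, g (v (j + 1)) = (G : EReal) ∧
      ∀ z ∈ S, f (v (j + 1)) + G + tau j / 2 * ‖z - v (j + 1)‖ ^ 2
        ≤ Fmin + tau j / 2 * ‖z - v j‖ ^ 2 := by
    intro j
    have hτ : 0 < tau j := htau_pos j
    set τ := tau j with hτdef
    set x := v j with hxdef
    set x' := v (j + 1) with hx'def
    set y := v j - τ⁻¹ • f' (v j) with hydef
    -- extract real value of g x'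
    have hg0 := hstep j z₀
    rw [hgS z₀ hz₀S, ← EReal.coe_add] at hg0
    obtain ⟨G, hG, -⟩ := ereal_le_extract13 (hproper_bot _) hg0
    refine ⟨G, hG, ?_⟩
    intro z hzS
    -- subgradient-type inequality at x'
    have hsub : G ≤ (Fmin - f z) + τ * ⟪x' - y, z - x'⟫ := by
      apply aux_le13 (M := τ / 2 * ‖z - x'‖ ^ 2)
      intro t ht0 ht1
      have hmem1 : ((x', G) : EuclideanSpace ℝ (Fin n) × ℝ) ∈
          {p : EuclideanSpace ℝ (Fin n) × ℝ | g p.1 ≤ (p.2 : EReal)} := by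
        simp [hx'def, hG]
      have hmem2 : ((z, Fmin - f z) : EuclideanSpace ℝ (Fin n) × ℝ) ∈
          {p : EuclideanSpace ℝ (Fin n) × ℝ | g p.1 ≤ (p.2 : EReal)} := by
        simp [hgS z hzS]
      have hcomb := hconv hmem1 hmem2 (by linarith : (0:ℝ) ≤ 1 - t) ht0.le (by ring)
      simp only [Prod.smul_mk, Prod.mk_add_mk, Set.mem_setOf_eq, smul_eq_mul] at hcomb
      have hz_t := hstep j ((1 - t) • x' + t • z)
      rw [hG] at hz_t
      have h5 : (G : EReal) + ((τ / 2 * ‖x' - y‖ ^ 2 : ℝ) : EReal)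
          ≤ ((((1 - t) * G + t * (Fmin - f z)) + τ / 2 * ‖((1 - t) • x' + t • z) - y‖ ^ 2 : ℝ) : EReal) := by
        refine le_trans hz_t ?_
        rw [EReal.coe_add]
        exact add_le_add_left hcomb _
      rw [← EReal.coe_add, EReal.coe_le_coe_iff] at h5
      have harg : ((1 - t) • x' + t • z) - y = (x' - y) + t • (z - x') := by module
      rw [harg, norm_add_smul_sq13] at h5
      have hdiv : t * G ≤ t * ((Fmin - f z) + τ * ⟪x' - y, z - x'⟫ + t * (τ / 2 * ‖z - x'‖ ^ 2)) := by
        nlinarith [h5]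
      exact le_of_mul_le_mul_left (by linarith [hdiv]) ht0
    -- combine everything
    have hinner : ⟪x' - y, z - x'⟫ = ⟪x' - x, z - x'⟫ + τ⁻¹ * ⟪f' x, z - x'⟫ := by
      have : x' - y = (x' - x) + τ⁻¹ • f' x := by rw [hydef, hxdef]; module
      rw [this, inner_add_left, real_inner_smul_left]
    have hexp : τ * (⟪x' - x, z - x'⟫ + τ⁻¹ * ⟪f' x, z - x'⟫)
        = τ * ⟪x' - x, z - x'⟫ + ⟪f' x, z - x'⟫ := by
      field_simp
    have hsub' : G ≤ Fmin - f z + (τ * ⟪x' - x, z - x'⟫ + ⟪f' x, z - x'⟫) := by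
      rw [hinner] at hsub; rw [← hexp]; linarith
    have hnorm : ‖z - x‖ ^ 2 = ‖x' - x‖ ^ 2 + 2 * ⟪x' - x, z - x'⟫ + ‖z - x'‖ ^ 2 := by
      have h7 : z - x = (x' - x) + (z - x') := by abel
      rw [h7, norm_add_sq_real]
    have hgrad := grad_ineq13 hf (hf' x) z
    have hinner2 : ⟪f' x, z - x⟫ = ⟪f' x, x' - x⟫ + ⟪f' x, z - x'⟫ := by
      rw [← inner_add_right]
      congr 1
      abel
    rw [hinner2] at hgrad
    have hls' := hls j
    rw [hnorm]
    nlinarith [hgrad, hls', hsub']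
  -- pass to infDist
  have main2 : ∀ j, ∃ G : ℝ, g (v (j + 1)) = (G : EReal) ∧
      f (v (j + 1)) + G + tau j / 2 * Metric.infDist (v (j + 1)) S ^ 2
        ≤ Fmin + tau j / 2 * Metric.infDist (v j) S ^ 2 := by
    intro j
    obtain ⟨G, hG, hmain⟩ := main j
    refine ⟨G, hG, ?_⟩
    set d := Metric.infDist (v j) S with hd
    set d' := Metric.infDist (v (j + 1)) S with hd'
    have hd0 : 0 ≤ d := Metric.infDist_nonneg
    have hd'0 : 0 ≤ d' := Metric.infDist_nonneg
    have hτ : 0 < tau j := htau_pos j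
    apply aux_le13 (M := tau j / 2 * (2 * d + 1))
    intro t ht0 ht1
    have hlt : Metric.infDist (v j) S < d + t := by rw [← hd]; linarith
    obtain ⟨z, hzS, hdz⟩ := (Metric.infDist_lt_iff ⟨z₀, hz₀S⟩).mp hlt
    have h1 := hmain z hzS
    have h2 : ‖z - v j‖ ≤ d + t := by
      rw [← dist_eq_norm, dist_comm]
      exact hdz.le
    have h3 : d' ≤ ‖z - v (j + 1)‖ := by
      rw [← dist_eq_norm, dist_comm]
      exact Metric.infDist_le_dist_of_mem hzS
    have h4 : ‖z - v j‖ ^ 2 ≤ (d + t) ^ 2 := by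
      nlinarith [norm_nonneg (z - v j)]
    have h5 : d' ^ 2 ≤ ‖z - v (j + 1)‖ ^ 2 := by nlinarith [norm_nonneg (z - v (j + 1))]
    have e4 := mul_le_mul_of_nonneg_left h4 (le_of_lt (half_pos hτ))
    have e5 := mul_le_mul_of_nonneg_left h5 (le_of_lt (half_pos hτ))
    have e6 : tau j / 2 * (d + t) ^ 2 ≤ tau j / 2 * d ^ 2 + t * (tau j / 2 * (2 * d + 1)) := by
      nlinarith [mul_nonneg (mul_nonneg (le_of_lt (half_pos hτ)) (by linarith : (0:ℝ) ≤ 1 - t)) ht0.le]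
    linarith [h1, e4, e5, e6]
  -- contraction of distances
  have contr : ∀ j, Metric.infDist (v (j + 1)) S ^ 2
      ≤ (1 / (1 + kappa / taub)) * Metric.infDist (v j) S ^ 2 := by
    intro j
    obtain ⟨G, hG, h1⟩ := main2 j
    have hQ := hQG (v (j + 1))
    rw [hF] at hQ
    simp only at hQ
    rw [hG, ← EReal.coe_add, EReal.coe_le_coe_iff] at hQ
    have hτ : 0 < tau j := htau_pos j
    have hkey : (tau j + kappa) * Metric.infDist (v (j + 1)) S ^ 2
        ≤ tau j * Metric.infDist (v j) S ^ 2 := by nlinarith [h1, hQ]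
    have hρ : 1 / (1 + kappa / taub) = taub / (taub + kappa) := by
      rw [show 1 + kappa / taub = (taub + kappa) / taub by field_simp, one_div_div]
    rw [hρ, div_mul_eq_mul_div, le_div_iff₀ (by positivity : (0:ℝ) < taub + kappa)]
    have c1 : (taub + kappa) * ((tau j + kappa) * Metric.infDist (v (j + 1)) S ^ 2)
        ≤ (taub + kappa) * (tau j * Metric.infDist (v j) S ^ 2) :=
      mul_le_mul_of_nonneg_left hkey (by positivity)
    have c2 : (taub + kappa) * (tau j * Metric.infDist (v j) S ^ 2)
        ≤ (tau j + kappa) * (taub * Metric.infDist (v j) S ^ 2) := by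
      nlinarith [mul_le_mul_of_nonneg_left (htaub j)
        (mul_nonneg hk.le (sq_nonneg (Metric.infDist (v j) S)))]
    have c3 : (tau j + kappa) * (Metric.infDist (v (j + 1)) S ^ 2 * (taub + kappa))
        ≤ (tau j + kappa) * (taub * Metric.infDist (v j) S ^ 2) := by
      nlinarith [c1, c2]
    exact le_of_mul_le_mul_left c3 (by positivity)
  -- geometric decay by induction
  have pow : ∀ j, Metric.infDist (v j) S ^ 2
      ≤ (1 / (1 + kappa / taub)) ^ j * Metric.infDist (v 0) S ^ 2 := by
    intro j
    induction j with
    | zero => simp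
    | succ k ih =>
      have hρ0 : (0:ℝ) ≤ 1 / (1 + kappa / taub) := by positivity
      calc Metric.infDist (v (k + 1)) S ^ 2
          ≤ (1 / (1 + kappa / taub)) * Metric.infDist (v k) S ^ 2 := contr k
        _ ≤ (1 / (1 + kappa / taub)) * ((1 / (1 + kappa / taub)) ^ k
              * Metric.infDist (v 0) S ^ 2) := mul_le_mul_of_nonneg_left ih hρ0
        _ = (1 / (1 + kappa / taub)) ^ (k + 1) * Metric.infDist (v 0) S ^ 2 := by ring
  -- conclusion
  intro j
  obtain ⟨G, hG, h1⟩ := main2 j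
  constructor
  · rw [hF]
    simp only
    rw [hG, ← EReal.coe_add, EReal.coe_le_coe_iff]
    have hnn : 0 ≤ tau j / 2 * Metric.infDist (v (j + 1)) S ^ 2 :=
      mul_nonneg (div_nonneg (htau_pos j).le (by norm_num)) (sq_nonneg _)
    linarith [h1]
  · have hτ2 : (0:ℝ) ≤ tau j / 2 := div_nonneg (htau_pos j).le (by norm_num)
    calc tau j / 2 * Metric.infDist (v j) S ^ 2
        ≤ tau j / 2 * ((1 / (1 + kappa / taub)) ^ j * Metric.infDist (v 0) S ^ 2) :=
          mul_le_mul_of_nonneg_left (pow j) hτ2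
      _ = tau j / 2 * (1 / (1 + kappa / taub)) ^ j * Metric.infDist (v 0) S ^ 2 := by ring
end

section
/- Let L_k > 0 and α_k ∈ (0,1] satisfy α_0 = 1 and 1 − α_k = α_k² L_k / (α_{k−1}² L_{k−1}) for all k ≥ 1, with α_k ∈ (0,1) for k ≥ 1. Define β_0 = 1 and β_k = ∏_{i=1}^k (1 − α_i). Then β_k = α_k² L_k / (α_0² L_0), and moreover (1 + α_0 √L_0 · Σ_{i=1}^k L_i^{−1/2})^{−2} ≤ β_k ≤ (1 + (α_0 √L_0 / 2) · Σ_{i=1}^k L_i^{−1/2})^{−2}. -/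
/-- **Two-sided O(1/k²) bounds on the momentum products.**
With `L_k > 0`, `α_0 = 1`, `α_k ∈ (0,1)` for `k ≥ 1`, satisfying
`1 − α_k = α_k² L_k/(α_{k−1}² L_{k−1})`, and `β_k = ∏_{i=1}^k (1 − α_i)`
(`β_0 = 1`), one has `β_k = α_k² L_k/(α_0² L_0)` and
`(1 + α_0 √L_0 Σ_{i=1}^k L_i^{−1/2})^{−2} ≤ β_k
  ≤ (1 + (α_0 √L_0/2) Σ_{i=1}^k L_i^{−1/2})^{−2}`. -/
theorem stmt15 (L α : ℕ → ℝ) (hL : ∀ k, 0 < L k) (hα0 : α 0 = 1)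
    (hα : ∀ k : ℕ, α (k + 1) ∈ Set.Ioo (0 : ℝ) 1)
    (hrec : ∀ k : ℕ, 1 - α (k + 1) = α (k + 1) ^ 2 * L (k + 1) / (α k ^ 2 * L k))
    (β : ℕ → ℝ)
    (hβ : β = fun k => ∏ i ∈ Finset.range k, (1 - α (i + 1))) :
    ∀ k : ℕ,
      β k = α k ^ 2 * L k / (α 0 ^ 2 * L 0) ∧
      ((1 + α 0 * Real.sqrt (L 0) *
          ∑ i ∈ Finset.range k, (Real.sqrt (L (i + 1)))⁻¹) ^ 2)⁻¹ ≤ β k ∧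
      β k ≤ ((1 + α 0 * Real.sqrt (L 0) / 2 *
          ∑ i ∈ Finset.range k, (Real.sqrt (L (i + 1)))⁻¹) ^ 2)⁻¹ := by
  have hαpos : ∀ k, 0 < α k := by
    intro k; cases k with
    | zero => rw [hα0]; norm_num
    | succ n => exact (hα n).1
  -- part 1
  have hβeq : ∀ k, β k = α k ^ 2 * L k / (α 0 ^ 2 * L 0) := by
    intro k
    induction k with
    | zero =>
      simp [hβ, hα0]
      exact (div_self (hL 0).ne').symm
    | succ n ih =>
      have h1 : β (n + 1) = β n * (1 - α (n + 1)) := by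
        simp [hβ, Finset.prod_range_succ]
      rw [h1, ih, hrec n]
      have h2 : α n ^ 2 * L n ≠ 0 :=
        mul_ne_zero (pow_ne_zero _ (hαpos n).ne') (hL n).ne'
      have h3 : α 0 ^ 2 * L 0 ≠ 0 :=
        mul_ne_zero (pow_ne_zero _ (hαpos 0).ne') (hL 0).ne'
      have h4 := (hαpos n).ne'
      have h5 := (hL n).ne'
      field_simp
  have hβpos : ∀ k, 0 < β k := by
    intro k
    rw [hβeq k]
    exact div_pos (mul_pos (pow_pos (hαpos k) 2) (hL k))
      (mul_pos (pow_pos (hαpos 0) 2) (hL 0))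
  have hβdec : ∀ k, β (k + 1) ≤ β k := by
    intro k
    have h1 : β (k + 1) = β k * (1 - α (k + 1)) := by
      simp [hβ, Finset.prod_range_succ]
    nlinarith [hβpos k, (hα k).1]
  -- step inequality
  have hstep : ∀ k,
      Real.sqrt (L 0) * (Real.sqrt (L (k + 1)))⁻¹ / 2
        ≤ (Real.sqrt (β (k + 1)))⁻¹ - (Real.sqrt (β k))⁻¹ ∧
      (Real.sqrt (β (k + 1)))⁻¹ - (Real.sqrt (β k))⁻¹
        ≤ Real.sqrt (L 0) * (Real.sqrt (L (k + 1)))⁻¹ := by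
    intro k
    set x := Real.sqrt (β k) with hx
    set y := Real.sqrt (β (k + 1)) with hy
    have hxpos : 0 < x := Real.sqrt_pos.mpr (hβpos k)
    have hypos : 0 < y := Real.sqrt_pos.mpr (hβpos (k + 1))
    have hyx : y ≤ x := Real.sqrt_le_sqrt (hβdec k)
    have hx2 : x ^ 2 = β k := Real.sq_sqrt (hβpos k).le
    have hy2 : y ^ 2 = β (k + 1) := Real.sq_sqrt (hβpos (k + 1)).le
    set c := Real.sqrt (L 0) * (Real.sqrt (L (k + 1)))⁻¹ with hc
    have hcpos : 0 < c := by
      have h0 := Real.sqrt_pos.mpr (hL 0)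
      have h1 := Real.sqrt_pos.mpr (hL (k + 1))
      positivity
    have hc2 : c ^ 2 = L 0 / L (k + 1) := by
      rw [hc, mul_pow, inv_pow, Real.sq_sqrt (hL 0).le, Real.sq_sqrt (hL (k + 1)).le]
      rw [div_eq_mul_inv]
    -- α (k+1) = c * y
    have hα2 : α (k + 1) ^ 2 = β (k + 1) * L 0 / L (k + 1) := by
      have h := hβeq (k + 1)
      rw [hα0] at h
      have hLne : L 0 ≠ 0 := (hL 0).ne'
      have hLne1 : L (k + 1) ≠ 0 := (hL (k + 1)).ne'
      field_simp at h ⊢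
      linarith [h]
    have hsq : α (k + 1) ^ 2 = (c * y) ^ 2 := by
      rw [mul_pow, hc2, hy2, hα2]
      field_simp
    have hαval : α (k + 1) = c * y := by
      have h1 : α (k + 1) = Real.sqrt (α (k + 1) ^ 2) :=
        (Real.sqrt_sq (hαpos (k + 1)).le).symm
      rw [h1, hsq, Real.sqrt_sq (by positivity)]
    -- key relation
    have hrel : x ^ 2 - y ^ 2 = c * y * x ^ 2 := by
      have h1 : β (k + 1) = β k * (1 - α (k + 1)) := by
        simp [hβ, Finset.prod_range_succ]
      rw [hx2, hy2, h1, hαval]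
      ring
    have hdiff : y⁻¹ - x⁻¹ = (x - y) / (x * y) := by
      rw [inv_sub_inv hypos.ne' hxpos.ne', mul_comm]
    rw [hdiff]
    constructor
    · rw [div_le_div_iff₀ (by norm_num) (by positivity)]
      nlinarith [mul_pos hxpos hypos, mul_pos hcpos (mul_pos hxpos hypos)]
    · rw [div_le_iff₀ (by positivity)]
      nlinarith [mul_pos hcpos (mul_pos hxpos (mul_pos hypos hypos))]
  -- telescoped bounds on (sqrt (β k))⁻¹
  have htel : ∀ k,
      1 + Real.sqrt (L 0) / 2 * ∑ i ∈ Finset.range k, (Real.sqrt (L (i + 1)))⁻¹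
        ≤ (Real.sqrt (β k))⁻¹ ∧
      (Real.sqrt (β k))⁻¹
        ≤ 1 + Real.sqrt (L 0) * ∑ i ∈ Finset.range k, (Real.sqrt (L (i + 1)))⁻¹ := by
    intro k
    induction k with
    | zero =>
      simp [hβ]
    | succ n ih =>
      obtain ⟨h1, h2⟩ := ih
      obtain ⟨h3, h4⟩ := hstep n
      rw [Finset.sum_range_succ]
      constructor
      · nlinarith
      · nlinarith
  -- conclude
  intro k
  refine ⟨hβeq k, ?_, ?_⟩
  · set S := ∑ i ∈ Finset.range k, (Real.sqrt (L (i + 1)))⁻¹ with hS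
    have hSnn : 0 ≤ S := by
      apply Finset.sum_nonneg
      intro i _
      positivity
    have hsq : 0 < Real.sqrt (β k) := Real.sqrt_pos.mpr (hβpos k)
    have hU : 0 < 1 + Real.sqrt (L 0) * S := by positivity
    have h2 := (htel k).2
    rw [hα0, one_mul]
    have hm : Real.sqrt (β k) * (Real.sqrt (β k))⁻¹ = 1 := mul_inv_cancel₀ hsq.ne'
    have h3 : (1 + Real.sqrt (L 0) * S)⁻¹ ≤ Real.sqrt (β k) := by
      rw [inv_eq_one_div, div_le_iff₀ hU]
      nlinarith [mul_le_mul_of_nonneg_left h2 hsq.le]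
    calc ((1 + Real.sqrt (L 0) * S) ^ 2)⁻¹
        = ((1 + Real.sqrt (L 0) * S)⁻¹) ^ 2 := by rw [inv_pow]
      _ ≤ (Real.sqrt (β k)) ^ 2 := by
          apply pow_le_pow_left₀ (by positivity) h3
      _ = β k := Real.sq_sqrt (hβpos k).le
  · set S := ∑ i ∈ Finset.range k, (Real.sqrt (L (i + 1)))⁻¹ with hS
    have hSnn : 0 ≤ S := by
      apply Finset.sum_nonneg
      intro i _
      positivity
    have hsq : 0 < Real.sqrt (β k) := Real.sqrt_pos.mpr (hβpos k)
    have hU : 0 < 1 + Real.sqrt (L 0) / 2 * S := by positivity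
    have h1 := (htel k).1
    rw [hα0, one_mul]
    have hm : Real.sqrt (β k) * (Real.sqrt (β k))⁻¹ = 1 := mul_inv_cancel₀ hsq.ne'
    have h3 : Real.sqrt (β k) ≤ (1 + Real.sqrt (L 0) / 2 * S)⁻¹ := by
      rw [inv_eq_one_div, le_div_iff₀ hU]
      nlinarith [mul_le_mul_of_nonneg_left h1 hsq.le]
    calc β k = (Real.sqrt (β k)) ^ 2 := (Real.sq_sqrt (hβpos k).le).symm
      _ ≤ ((1 + Real.sqrt (L 0) / 2 * S)⁻¹) ^ 2 := by
          apply pow_le_pow_left₀ (by positivity) h3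
      _ = ((1 + Real.sqrt (L 0) / 2 * S) ^ 2)⁻¹ := by rw [inv_pow]
end
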